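/- arXiv:1905.08666 — 6 statements merged into one kernel-verified Lean document; each statement's English description precedes it below -/
import Mathlib

section
/- Let k ∈ (0,1), λ ∈ (0,1], and z ∈ 𝔻. Then 1 + k·z² + (1 + k)·λ·z ≠ 0, and the value p := (1 − k·z² + (1 − k)·λ·z)/(1 + k·z² + (1 + k)·λ·z) satisfies |p − 1| < k·|p + 1|; in particular p ∈ U(k) and Re p > 0. (Equivalently, (p − 1)/(p + 1) = −k·z·(z + λ)/(1 + λ·z) and |z·(z + λ)/(1 + λ·z)| < 1 for z ∈ 𝔻.) -/
/-!
Put `u = 1 + λz` and `v = z (z + λ)`. The numerator and denominator of `p` are `u - k v` and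
`u + k v`, so `(p - 1)/(p + 1) = -k v/u`, and everything reduces to `|v| < |u|` on the disk.
That holds because `|1 + λz|² - |z + λ|² = (1 - λ²)(1 - |z|²) ≥ 0` and `|z| < 1`.
-/

open Complex

namespace Complex

theorem re_pos_of_norm_sub_one_lt_norm_add_one {p : ℂ} (h : ‖p - 1‖ < ‖p + 1‖) : 0 < p.re := by
  have hsq := pow_lt_pow_left₀ h (norm_nonneg _) two_ne_zero
  rw [Complex.sq_norm, Complex.sq_norm, normSq_apply, normSq_apply] at hsq
  simp only [sub_re, sub_im, add_re, add_im, one_re, one_im] at hsq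
  nlinarith

theorem add_ne_zero_of_norm_lt {a b : ℂ} (h : ‖b‖ < ‖a‖) : a + b ≠ 0 := by
  intro hab
  rw [eq_neg_of_add_eq_zero_left hab, norm_neg] at h
  exact h.false

section CayleyQuotient

variable {a b : ℂ}

theorem sub_div_add_sub_one (h : a + b ≠ 0) : (a - b) / (a + b) - 1 = -(2 * b) / (a + b) := by
  rw [div_sub_one h]
  ring

theorem sub_div_add_add_one (h : a + b ≠ 0) : (a - b) / (a + b) + 1 = 2 * a / (a + b) := by
  rw [div_add_one h]
  ring

theorem norm_sub_div_add_sub_one_lt_iff (h : a + b ≠ 0) {c : ℝ} :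
    ‖(a - b) / (a + b) - 1‖ < c * ‖(a - b) / (a + b) + 1‖ ↔ ‖b‖ < c * ‖a‖ := by
  have hpos : 0 < ‖a + b‖ := norm_pos_iff.2 h
  rw [sub_div_add_sub_one h, sub_div_add_add_one h, norm_div, norm_div, norm_neg, norm_mul,
    norm_mul, Complex.norm_two, mul_div_assoc', div_lt_div_iff_of_pos_right hpos]
  constructor <;> intro <;> linarith

theorem sub_div_add_sub_one_div_add_one (ha : a ≠ 0) (h : a + b ≠ 0) :
    ((a - b) / (a + b) - 1) / ((a - b) / (a + b) + 1) = -b / a := by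
  rw [sub_div_add_sub_one h, sub_div_add_add_one h]
  field_simp

end CayleyQuotient

theorem normSq_one_add_mul_sub_normSq_add (l : ℝ) (z : ℂ) :
    normSq (1 + l * z) - normSq (z + l) = (1 - l ^ 2) * (1 - normSq z) := by
  simp only [normSq_apply, add_re, add_im, mul_re, mul_im, one_re, one_im, ofReal_re, ofReal_im]
  ring

theorem norm_add_le_norm_one_add_mul {l : ℝ} (hl : |l| ≤ 1) {z : ℂ} (hz : ‖z‖ ≤ 1) :
    ‖z + l‖ ≤ ‖1 + l * z‖ := by
  have hl2 : l ^ 2 ≤ 1 := by nlinarith [sq_abs l, abs_nonneg l]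
  have hz2 : normSq z ≤ 1 := by rw [← Complex.sq_norm]; nlinarith [norm_nonneg z]
  have := normSq_one_add_mul_sub_normSq_add l z
  refine pow_le_pow_iff_left₀ (norm_nonneg _) (norm_nonneg _) two_ne_zero |>.1 ?_
  rw [Complex.sq_norm, Complex.sq_norm]
  nlinarith [mul_nonneg (sub_nonneg.2 hl2) (sub_nonneg.2 hz2)]

theorem norm_one_add_mul_pos {l : ℝ} (hl : |l| ≤ 1) {z : ℂ} (hz : ‖z‖ < 1) :
    0 < ‖1 + l * z‖ := by
  have hlz : ‖(l : ℂ) * z‖ < 1 := by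
    rw [norm_mul, norm_real, Real.norm_eq_abs]
    nlinarith [norm_nonneg z, abs_nonneg l]
  calc 0 < 1 - ‖(l : ℂ) * z‖ := by linarith
    _ = ‖(1 : ℂ)‖ - ‖(l : ℂ) * z‖ := by rw [norm_one]
    _ ≤ ‖1 + l * z‖ := norm_sub_le_norm_add _ _

theorem norm_mul_add_lt_norm_one_add_mul {l : ℝ} (hl : |l| ≤ 1) {z : ℂ} (hz : ‖z‖ < 1) :
    ‖z * (z + l)‖ < ‖1 + l * z‖ :=
  calc ‖z * (z + l)‖ = ‖z‖ * ‖z + l‖ := norm_mul _ _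
    _ ≤ ‖z‖ * ‖1 + l * z‖ :=
      mul_le_mul_of_nonneg_left (norm_add_le_norm_one_add_mul hl hz.le) (norm_nonneg z)
    _ < ‖1 + l * z‖ := mul_lt_of_lt_one_left (norm_one_add_mul_pos hl hz) hz

end Complex

/-- For `k ∈ (0,1)`, `λ ∈ (0,1]` and `z` in the unit disk, the value
`p = (1 - k z² + (1-k) λ z)/(1 + k z² + (1+k) λ z)` is well defined and satisfies
`|p - 1| < k |p + 1|`; in particular `p ∈ U(k)` and `Re p > 0`. Moreover
`(p-1)/(p+1) = -k z (z+λ)/(1+λz)` and `|z (z+λ)/(1+λz)| < 1`. -/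
theorem stmt_2 (k l : ℝ) (hk0 : 0 < k) (hk1 : k < 1) (hl0 : 0 < l) (hl1 : l ≤ 1)
    (z : ℂ) (hz : ‖z‖ < 1) :
    1 + (k : ℂ) * z ^ 2 + (1 + (k : ℂ)) * (l : ℂ) * z ≠ 0 ∧
    ‖(1 - (k : ℂ) * z ^ 2 + (1 - (k : ℂ)) * (l : ℂ) * z) /
          (1 + (k : ℂ) * z ^ 2 + (1 + (k : ℂ)) * (l : ℂ) * z) - 1‖
      < k * ‖(1 - (k : ℂ) * z ^ 2 + (1 - (k : ℂ)) * (l : ℂ) * z) /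
          (1 + (k : ℂ) * z ^ 2 + (1 + (k : ℂ)) * (l : ℂ) * z) + 1‖ ∧
    0 < (((1 - (k : ℂ) * z ^ 2 + (1 - (k : ℂ)) * (l : ℂ) * z) /
          (1 + (k : ℂ) * z ^ 2 + (1 + (k : ℂ)) * (l : ℂ) * z))).re ∧
    ((1 - (k : ℂ) * z ^ 2 + (1 - (k : ℂ)) * (l : ℂ) * z) /
          (1 + (k : ℂ) * z ^ 2 + (1 + (k : ℂ)) * (l : ℂ) * z) - 1) /
      ((1 - (k : ℂ) * z ^ 2 + (1 - (k : ℂ)) * (l : ℂ) * z) /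
          (1 + (k : ℂ) * z ^ 2 + (1 + (k : ℂ)) * (l : ℂ) * z) + 1)
      = -(k : ℂ) * z * (z + (l : ℂ)) / (1 + (l : ℂ) * z) ∧
    ‖z * (z + (l : ℂ)) / (1 + (l : ℂ) * z)‖ < 1 := by
  have hl : |l| ≤ 1 := abs_le.2 ⟨by linarith, hl1⟩
  have hvu := norm_mul_add_lt_norm_one_add_mul hl hz
  have hu := norm_one_add_mul_pos hl hz
  have hkv : ‖(k : ℂ) * (z * (z + l))‖ = k * ‖z * (z + l)‖ := by
    rw [norm_mul, norm_real, Real.norm_of_nonneg hk0.le]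
  have hkvu : ‖(k : ℂ) * (z * (z + l))‖ < ‖1 + l * z‖ := by
    rw [hkv]; nlinarith [norm_nonneg (z * (z + l))]
  have hden := add_ne_zero_of_norm_lt hkvu
  rw [show 1 - (k : ℂ) * z ^ 2 + (1 - k) * l * z = 1 + l * z - k * (z * (z + l)) by ring,
    show 1 + (k : ℂ) * z ^ 2 + (1 + k) * l * z = 1 + l * z + k * (z * (z + l)) by ring,
    norm_sub_div_add_sub_one_lt_iff hden, sub_div_add_sub_one_div_add_one (norm_pos_iff.1 hu) hden,
    norm_div, div_lt_one hu, hkv]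
  refine ⟨hden, mul_lt_mul_of_pos_left hvu hk0,
    re_pos_of_norm_sub_one_lt_norm_add_one ?_, by ring, hvu⟩
  rwa [← one_mul ‖_ + 1‖, norm_sub_div_add_sub_one_lt_iff hden, one_mul]
end

section
/- Let k ∈ (0,1), z ∈ 𝔻, and let w : [0,∞) → 𝔻 be differentiable with w(0) = z and w'(t) = −w(t)·(1 − k·w(t)²)/(1 + k·w(t)²) for all t ≥ 0 (the denominator being nonzero since |w(t)| < 1). Then w(t)/(1 − k·w(t)²) = e^{−t}·z/(1 − k·z²) for all t ≥ 0, and consequently e^t·w(t) → z/(1 − k·z²) as t → ∞. Hence the function f₁(z) = z/(1 − k·z²), whose third Taylor coefficient equals k, is represented by the Loewner–Kufarev equation with the Herglotz function p(z) = (1 − k·z²)/(1 + k·z²), whose values lie in U(k). -/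
/-!
Since `(ζ / (1 - k ζ²))' = (1 + k ζ²) / (1 - k ζ²)²`, the substitution `F = w / (1 - k w²)`
turns the Loewner–Kufarev equation into `F' = -F`, so `eᵗ F` is constant. As `|1 - k w²| ≤ 2`,
`w` then decays like `e⁻ᵗ`, and `eᵗ w = F(0) (1 - k w²) → F(0)`. For the Herglotz function,
`p - 1 = -2kζ² / (1 + kζ²)` and `p + 1 = 2 / (1 + kζ²)`.
-/

open Filter Topology

section ExpDecay

variable {E : Type*} [NormedAddCommGroup E] [NormedSpace ℝ E]

theorem eq_exp_neg_smul_of_hasDerivWithinAt_neg {F : ℝ → E}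
    (hF : ∀ t : ℝ, 0 ≤ t → HasDerivWithinAt F (-F t) (Set.Ici 0) t) {t : ℝ} (ht : 0 ≤ t) :
    F t = Real.exp (-t) • F 0 := by
  have hG : ∀ s ∈ Set.Ici (0 : ℝ),
      HasDerivWithinAt (fun s => Real.exp s • F s) 0 (Set.Ici 0) s := fun s hs =>
    ((Real.hasDerivAt_exp s).hasDerivWithinAt.smul (hF s hs)).congr_deriv (by simp)
  have hconst : Real.exp t • F t = F 0 := by
    simpa [sub_eq_zero] using (convex_Ici (0 : ℝ)).norm_image_sub_le_of_norm_hasDerivWithin_le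
      hG (fun _ _ => norm_zero.le) Set.self_mem_Ici ht
  rw [← hconst, smul_smul, ← Real.exp_add, neg_add_cancel, Real.exp_zero, one_smul]

end ExpDecay

section LoewnerKufarev

variable {c : ℂ}

theorem norm_mul_sq_lt_one (hc : ‖c‖ ≤ 1) {u : ℂ} (hu : ‖u‖ < 1) : ‖c * u ^ 2‖ < 1 := by
  rw [norm_mul, norm_pow]
  calc ‖c‖ * ‖u‖ ^ 2 ≤ ‖u‖ ^ 2 := mul_le_of_le_one_left (sq_nonneg _) hc
    _ < 1 := pow_lt_one₀ (norm_nonneg _) hu two_ne_zero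

theorem one_sub_mul_sq_ne_zero (hc : ‖c‖ ≤ 1) {u : ℂ} (hu : ‖u‖ < 1) : 1 - c * u ^ 2 ≠ 0 :=
  sub_ne_zero.2 fun h => (norm_mul_sq_lt_one hc hu).ne (by rw [← h, norm_one])

theorem one_add_mul_sq_ne_zero (hc : ‖c‖ ≤ 1) {u : ℂ} (hu : ‖u‖ < 1) : 1 + c * u ^ 2 ≠ 0 :=
  fun h => (norm_mul_sq_lt_one hc hu).ne (by rw [eq_neg_of_add_eq_zero_right h, norm_neg, norm_one])

theorem norm_one_sub_mul_sq_le_two (hc : ‖c‖ ≤ 1) {u : ℂ} (hu : ‖u‖ < 1) :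
    ‖1 - c * u ^ 2‖ ≤ 2 :=
  (norm_sub_le _ _).trans (by linarith [norm_one (α := ℂ), norm_mul_sq_lt_one hc hu])

theorem hasDerivAt_div_one_sub_mul_sq {u : ℂ} (hu : 1 - c * u ^ 2 ≠ 0) :
    HasDerivAt (fun ζ : ℂ => ζ / (1 - c * ζ ^ 2)) ((1 + c * u ^ 2) / (1 - c * u ^ 2) ^ 2) u := by
  refine ((hasDerivAt_id u).div (((hasDerivAt_pow 2 u).const_mul c).const_sub 1) hu).congr_deriv ?_
  simp only [id]
  field_simp
  ring

theorem hasDerivAt_one_add_mul_sq_div {u : ℂ} (hu : 1 - c * u ^ 2 ≠ 0) :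
    HasDerivAt (fun ζ : ℂ => (1 + c * ζ ^ 2) / (1 - c * ζ ^ 2) ^ 2)
      (2 * c * u * (3 + c * u ^ 2) / (1 - c * u ^ 2) ^ 3) u := by
  refine ((((hasDerivAt_pow 2 u).const_mul c).const_add 1).div
    ((((hasDerivAt_pow 2 u).const_mul c).const_sub 1).pow 2) (pow_ne_zero 2 hu)).congr_deriv ?_
  simp only [Pi.pow_apply]
  field_simp
  ring

theorem hasDerivAt_mul_three_add_mul_sq_div_zero :
    HasDerivAt (fun ζ : ℂ => 2 * c * ζ * (3 + c * ζ ^ 2) / (1 - c * ζ ^ 2) ^ 3) (6 * c) 0 := by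
  refine ((((hasDerivAt_id (0 : ℂ)).const_mul (2 * c)).mul
      (((hasDerivAt_pow 2 (0 : ℂ)).const_mul c).const_add 3)).div
    ((((hasDerivAt_pow 2 (0 : ℂ)).const_mul c).const_sub 1).pow 3) (by simp)).congr_deriv ?_
  simp
  ring

theorem iteratedDeriv_three_div_one_sub_mul_sq_zero :
    iteratedDeriv 3 (fun ζ : ℂ => ζ / (1 - c * ζ ^ 2)) 0 = 6 * c := by
  have hne : ∀ᶠ u in 𝓝 (0 : ℂ), 1 - c * u ^ 2 ≠ 0 :=
    (by fun_prop : Continuous fun u : ℂ => 1 - c * u ^ 2).continuousAt.eventually_ne (by simp)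
  have hderiv₁ : ∀ u, (∀ᶠ v in 𝓝 u, 1 - c * v ^ 2 ≠ 0) →
      deriv (fun ζ : ℂ => ζ / (1 - c * ζ ^ 2)) =ᶠ[𝓝 u]
        fun v => (1 + c * v ^ 2) / (1 - c * v ^ 2) ^ 2 :=
    fun _ hu => hu.mono fun _ hv => (hasDerivAt_div_one_sub_mul_sq hv).deriv
  have hderiv₂ : deriv (deriv fun ζ : ℂ => ζ / (1 - c * ζ ^ 2)) =ᶠ[𝓝 0]
      fun u => 2 * c * u * (3 + c * u ^ 2) / (1 - c * u ^ 2) ^ 3 := by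
    filter_upwards [hne.eventually_nhds] with u hu
    rw [(hderiv₁ u hu).deriv_eq,
      (hasDerivAt_one_add_mul_sq_div hu.self_of_nhds).deriv]
  rw [iteratedDeriv_succ, iteratedDeriv_succ, iteratedDeriv_one, hderiv₂.deriv_eq,
    hasDerivAt_mul_three_add_mul_sq_div_zero.deriv]

theorem HasDerivWithinAt.div_one_sub_mul_sq {w : ℝ → ℂ} {s : Set ℝ} {t : ℝ}
    (hw : HasDerivWithinAt w (-(w t * (1 - c * w t ^ 2) / (1 + c * w t ^ 2))) s t)
    (h₁ : 1 - c * w t ^ 2 ≠ 0) (h₂ : 1 + c * w t ^ 2 ≠ 0) :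
    HasDerivWithinAt (fun s => w s / (1 - c * w s ^ 2)) (-(w t / (1 - c * w t ^ 2))) s t :=
  ((hasDerivAt_div_one_sub_mul_sq h₁).comp_hasDerivWithinAt t hw).congr_deriv (by field_simp)

theorem div_one_sub_mul_sq_eq_of_hasDerivWithinAt (hc : ‖c‖ ≤ 1) {w : ℝ → ℂ}
    (hw_mem : ∀ t : ℝ, 0 ≤ t → ‖w t‖ < 1)
    (hode : ∀ t : ℝ, 0 ≤ t →
      HasDerivWithinAt w (-(w t * (1 - c * w t ^ 2) / (1 + c * w t ^ 2))) (Set.Ici 0) t)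
    {t : ℝ} (ht : 0 ≤ t) :
    w t / (1 - c * w t ^ 2) = Real.exp (-t) * (w 0 / (1 - c * w 0 ^ 2)) := by
  rw [← Complex.real_smul]
  refine eq_exp_neg_smul_of_hasDerivWithinAt_neg (F := fun s => w s / (1 - c * w s ^ 2))
    (fun s hs => ?_) ht
  exact (hode s hs).div_one_sub_mul_sq (one_sub_mul_sq_ne_zero hc (hw_mem s hs))
    (one_add_mul_sq_ne_zero hc (hw_mem s hs))

theorem tendsto_exp_mul_of_div_one_sub_mul_sq_eq (hc : ‖c‖ ≤ 1) {w : ℝ → ℂ}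
    (hw_mem : ∀ t : ℝ, 0 ≤ t → ‖w t‖ < 1) {a : ℂ}
    (h : ∀ t : ℝ, 0 ≤ t → w t / (1 - c * w t ^ 2) = Real.exp (-t) * a) :
    Tendsto (fun t : ℝ => (Real.exp t : ℂ) * w t) atTop (𝓝 a) := by
  have hw : ∀ t : ℝ, 0 ≤ t → w t = Real.exp (-t) * a * (1 - c * w t ^ 2) := fun t ht =>
    (div_eq_iff (one_sub_mul_sq_ne_zero hc (hw_mem t ht))).1 (h t ht)
  have hscaled : ∀ t : ℝ, 0 ≤ t → (Real.exp t : ℂ) * w t = a * (1 - c * w t ^ 2) := by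
    intro t ht
    have hexp : (Real.exp t : ℂ) * Real.exp (-t) = 1 := by
      rw [← Complex.ofReal_mul, ← Real.exp_add, add_neg_cancel, Real.exp_zero, Complex.ofReal_one]
    linear_combination (Real.exp t : ℂ) * hw t ht + a * (1 - c * w t ^ 2) * hexp
  have hbound : ∀ t : ℝ, 0 ≤ t → ‖w t‖ ≤ 2 * ‖a‖ * Real.exp (-t) := by
    intro t ht
    rw [hw t ht, norm_mul, norm_mul, Complex.norm_real, Real.norm_of_nonneg (Real.exp_pos _).le]
    nlinarith [mul_le_mul_of_nonneg_left (norm_one_sub_mul_sq_le_two hc (hw_mem t ht))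
      (mul_nonneg (Real.exp_pos (-t)).le (norm_nonneg a))]
  have hw_zero : Tendsto w atTop (𝓝 0) :=
    squeeze_zero_norm' ((eventually_ge_atTop 0).mono hbound)
      (by simpa using Real.tendsto_exp_neg_atTop_nhds_zero.const_mul (2 * ‖a‖))
  have hlim : Tendsto (fun t => a * (1 - c * w t ^ 2)) atTop (𝓝 a) := by
    simpa using (((hw_zero.pow 2).const_mul c).const_sub 1).const_mul a
  exact hlim.congr' ((eventually_ge_atTop 0).mono fun t ht => (hscaled t ht).symm)

theorem norm_div_sub_one_le_mul_norm_div_add_one {ζ : ℂ} (hζ : ‖ζ‖ ≤ 1)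
    (h : 1 + c * ζ ^ 2 ≠ 0) :
    ‖(1 - c * ζ ^ 2) / (1 + c * ζ ^ 2) - 1‖ ≤ ‖c‖ * ‖(1 - c * ζ ^ 2) / (1 + c * ζ ^ 2) + 1‖ := by
  rw [div_sub_one h, div_add_one h, show 1 - c * ζ ^ 2 - (1 + c * ζ ^ 2) = -2 * c * ζ ^ 2 by ring,
    show 1 - c * ζ ^ 2 + (1 + c * ζ ^ 2) = 2 by ring, norm_div, norm_div, mul_div_assoc',
    div_le_div_iff_of_pos_right (norm_pos_iff.2 h)]
  simp only [norm_mul, norm_neg, norm_pow, Complex.norm_ofNat]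
  nlinarith [norm_nonneg c, pow_le_one₀ (norm_nonneg ζ) hζ (n := 2)]

end LoewnerKufarev

theorem stmt_3_general (k : ℝ) (hk0 : 0 < k) (hk1 : k < 1) (z : ℂ)
    (w : ℝ → ℂ) (hw_mem : ∀ t : ℝ, 0 ≤ t → ‖w t‖ < 1)
    (hw0 : w 0 = z)
    (hode : ∀ t : ℝ, 0 ≤ t →
        HasDerivWithinAt w
          (-(w t * (1 - (k : ℂ) * w t ^ 2) / (1 + (k : ℂ) * w t ^ 2)))
          (Set.Ici 0) t) :
    (∀ t : ℝ, 0 ≤ t →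
        w t / (1 - (k : ℂ) * w t ^ 2) = (Real.exp (-t) : ℂ) * z / (1 - (k : ℂ) * z ^ 2)) ∧
    Tendsto (fun t : ℝ => (Real.exp t : ℂ) * w t) atTop
      (nhds (z / (1 - (k : ℂ) * z ^ 2))) ∧
    iteratedDeriv 3 (fun ζ : ℂ => ζ / (1 - (k : ℂ) * ζ ^ 2)) 0 / 6 = (k : ℂ) ∧
    (∀ ζ ∈ Metric.ball (0 : ℂ) 1,
        ‖(1 - (k : ℂ) * ζ ^ 2) / (1 + (k : ℂ) * ζ ^ 2) - 1‖
          ≤ k * ‖(1 - (k : ℂ) * ζ ^ 2) / (1 + (k : ℂ) * ζ ^ 2) + 1‖) := by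
  have hk : ‖(k : ℂ)‖ = k := by rw [Complex.norm_real, Real.norm_of_nonneg hk0.le]
  have hc : ‖(k : ℂ)‖ ≤ 1 := hk.symm ▸ hk1.le
  have hsol : ∀ t : ℝ, 0 ≤ t →
      w t / (1 - (k : ℂ) * w t ^ 2) = (Real.exp (-t) : ℂ) * (z / (1 - (k : ℂ) * z ^ 2)) :=
    fun t ht => hw0 ▸ div_one_sub_mul_sq_eq_of_hasDerivWithinAt hc hw_mem hode ht
  refine ⟨fun t ht => by rw [hsol t ht, mul_div_assoc],
    tendsto_exp_mul_of_div_one_sub_mul_sq_eq hc hw_mem hsol, ?_, fun ζ hζ => ?_⟩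
  · rw [iteratedDeriv_three_div_one_sub_mul_sq_zero, mul_div_cancel_left₀ _ (by norm_num)]
  · have hζ' : ‖ζ‖ < 1 := mem_ball_zero_iff.1 hζ
    exact (norm_div_sub_one_le_mul_norm_div_add_one hζ'.le (one_add_mul_sq_ne_zero hc hζ')).trans_eq
      (by rw [hk])

/-- Explicit solution of the Loewner–Kufarev ODE with Herglotz function
`p(z) = (1 - k z²)/(1 + k z²)`: any solution `w` on `[0,∞)` with `w(0) = z` satisfies
`w(t)/(1 - k w(t)²) = e^{-t} z/(1 - k z²)`, hence `e^t w(t) → z/(1 - k z²)`.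
The function `f₁(z) = z/(1 - k z²)` has third Taylor coefficient `k`, and the values of
`p` on the disk lie in `U(k) = {w : |w - 1| ≤ k |w + 1|}`. -/
theorem stmt_3 (k : ℝ) (hk0 : 0 < k) (hk1 : k < 1) (z : ℂ) (hz : ‖z‖ < 1)
    (w : ℝ → ℂ) (hw_mem : ∀ t : ℝ, 0 ≤ t → ‖w t‖ < 1)
    (hw0 : w 0 = z)
    (hode : ∀ t : ℝ, 0 ≤ t →
        HasDerivWithinAt w
          (-(w t * (1 - (k : ℂ) * w t ^ 2) / (1 + (k : ℂ) * w t ^ 2)))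
          (Set.Ici 0) t) :
    (∀ t : ℝ, 0 ≤ t →
        w t / (1 - (k : ℂ) * w t ^ 2) = (Real.exp (-t) : ℂ) * z / (1 - (k : ℂ) * z ^ 2)) ∧
    Tendsto (fun t : ℝ => (Real.exp t : ℂ) * w t) atTop
      (nhds (z / (1 - (k : ℂ) * z ^ 2))) ∧
    iteratedDeriv 3 (fun ζ : ℂ => ζ / (1 - (k : ℂ) * ζ ^ 2)) 0 / 6 = (k : ℂ) ∧
    (∀ ζ ∈ Metric.ball (0 : ℂ) 1,
        ‖(1 - (k : ℂ) * ζ ^ 2) / (1 + (k : ℂ) * ζ ^ 2) - 1‖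
          ≤ k * ‖(1 - (k : ℂ) * ζ ^ 2) / (1 + (k : ℂ) * ζ ^ 2) + 1‖) :=
  stmt_3_general k hk0 hk1 z w hw_mem hw0 hode
end

section
/- Let k ∈ (0,1) and let a, b ∈ ℂ with |a| ≤ k and |b| ≤ k. Then |a − b| ≤ (2k/(1 + k²))·|1 − conj(b)·a|. (In other words, the pseudo-hyperbolic diameter of the closed disk of radius k centered at 0 equals 2k/(1 + k²); equivalently, a Möbius automorphism of the unit disk sending a point of the closed disk {|z| ≤ k} to 0 maps that disk into {|z| ≤ 2k/(1 + k²)}.) -/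
/-!
Write `x = ‖a‖`, `y = ‖b‖` and `t = Re (conj b · a) ≥ -xy`. Then `‖a - b‖² = x² + y² - 2t` and
`‖1 - conj b · a‖² = 1 + x²y² - 2t`, so for `0 ≤ c ≤ 1` the bound `‖a - b‖ ≤ c ‖1 - conj b · a‖`
is hardest at `t = -xy`, where it reads `x + y ≤ c (1 + xy)`: the strong triangle inequality of
the pseudo-hyperbolic distance through `0`. For `c = 2k / (1 + k²)` this holds on `x, y ≤ k`.
-/

open ComplexConjugate

namespace Complex

lemma sq_norm_sub_eq (a b : ℂ) :
    ‖a - b‖ ^ 2 = ‖a‖ ^ 2 + ‖b‖ ^ 2 - 2 * (conj b * a).re := by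
  simp only [Complex.sq_norm, normSq_sub, mul_comm a]

lemma sq_norm_one_sub_conj_mul (a b : ℂ) :
    ‖1 - conj b * a‖ ^ 2 = 1 + ‖a‖ ^ 2 * ‖b‖ ^ 2 - 2 * (conj b * a).re := by
  simp only [Complex.sq_norm, normSq_sub, normSq_one, one_mul, conj_re, normSq_mul, normSq_conj]
  ring

lemma norm_sub_le_mul_norm_one_sub_conj_mul {a b : ℂ} {c : ℝ} (hc : c ≤ 1)
    (h : ‖a‖ + ‖b‖ ≤ c * (1 + ‖a‖ * ‖b‖)) :
    ‖a - b‖ ≤ c * ‖1 - conj b * a‖ := by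
  have hx := norm_nonneg a
  have hy := norm_nonneg b
  have hc0 : 0 ≤ c := nonneg_of_mul_nonneg_left ((add_nonneg hx hy).trans h) (by positivity)
  have hre : -(‖a‖ * ‖b‖) ≤ (conj b * a).re := by
    have := neg_le_of_abs_le (abs_re_le_norm (conj b * a))
    rwa [norm_mul, norm_conj, mul_comm] at this
  have hsq : (‖a‖ + ‖b‖) ^ 2 ≤ c ^ 2 * (1 + ‖a‖ * ‖b‖) ^ 2 := by
    rw [← mul_pow]; exact pow_le_pow_left₀ (by positivity) h 2
  have hc2 : 0 ≤ 1 - c ^ 2 := by nlinarith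
  refine le_of_pow_le_pow_left₀ two_ne_zero (by positivity) ?_
  rw [mul_pow, sq_norm_sub_eq, sq_norm_one_sub_conj_mul]
  nlinarith [mul_nonneg hc2 (neg_le_iff_add_nonneg.1 hre)]

end Complex

lemma two_mul_div_one_add_sq_le_one (k : ℝ) : 2 * k / (1 + k ^ 2) ≤ 1 :=
  div_le_one_of_le₀ (by nlinarith [sq_nonneg (k - 1)]) (by positivity)

lemma add_le_two_mul_div_one_add_sq_mul {k x y : ℝ} (hk : k ≤ 1) (hx : 0 ≤ x) (hy : 0 ≤ y)
    (hxk : x ≤ k) (hyk : y ≤ k) :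
    x + y ≤ 2 * k / (1 + k ^ 2) * (1 + x * y) := by
  rw [div_mul_eq_mul_div, le_div_iff₀ (by positivity)]
  -- `2k(1 + xy) - (1 + k²)(x + y) = (k - x)(1 - ky) + (k - y)(1 - kx)`
  nlinarith [mul_nonneg (sub_nonneg.2 hxk) (by nlinarith : 0 ≤ 1 - k * y),
    mul_nonneg (sub_nonneg.2 hyk) (by nlinarith : 0 ≤ 1 - k * x)]

theorem stmt_6_general (k : ℝ) (hk1 : k < 1) (a b : ℂ)
    (ha : ‖a‖ ≤ k) (hb : ‖b‖ ≤ k) :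
    ‖a - b‖ ≤ 2 * k / (1 + k ^ 2) * ‖1 - (starRingEnd ℂ) b * a‖ :=
  Complex.norm_sub_le_mul_norm_one_sub_conj_mul (two_mul_div_one_add_sq_le_one k)
    (add_le_two_mul_div_one_add_sq_mul hk1.le (norm_nonneg a) (norm_nonneg b) ha hb)

/-- The pseudo-hyperbolic diameter of the closed disk `{|z| ≤ k}` is
`2k/(1+k²)`: if `|a| ≤ k` and `|b| ≤ k` then `|a - b| ≤ (2k/(1+k²)) |1 - conj(b) a|`. -/
theorem stmt_6 (k : ℝ) (hk0 : 0 < k) (hk1 : k < 1) (a b : ℂ)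
    (ha : ‖a‖ ≤ k) (hb : ‖b‖ ≤ k) :
    ‖a - b‖ ≤ 2 * k / (1 + k ^ 2) * ‖1 - (starRingEnd ℂ) b * a‖ :=
  stmt_6_general k hk1 a b ha hb
end

section
/- Let f be holomorphic on an open set U ⊆ ℂ, let a₂ ∈ ℂ, and for w ∈ U with f'(w) ≠ 0 set b(w) := a₂ − f''(w)/(2·f'(w)) and S_f(w) := f'''(w)/f'(w) − (3/2)·(f''(w)/f'(w))². Define Φ(z, w) := f(w) + f'(w)·(z − w)/(1 + b(w)·(z − w)) and φ(z, w) := 2·a₂·(z − w) + (z − w)²·(a₂² + S_f(w)/2). Then Φ(z, z) = f(z) for all z ∈ U with f'(z) ≠ 0, and at every point (z, w) with w ∈ U, f'(w) ≠ 0 and 1 + b(w)·(z − w) ≠ 0, the partial derivatives of Φ satisfy ∂Φ/∂w (z, w) = φ(z, w)·∂Φ/∂z (z, w). -/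
/-!
With `D = 1 + b(w)(z - w)`, `Φ` is a Möbius map in `z`, so `∂Φ/∂z = f'(w) / D²`. The point of
the choice of `b` is that `f'' = 2 f' (a₂ - b)` and that `b` satisfies the Riccati equation
`b' = -(S_f / 2 + (b - a₂)²)`; substituting both into the quotient rule for `∂Φ/∂w` leaves
`f'(w) φ(z, w) / D²`.
-/

noncomputable section

/-- The Schwarzian derivative `S_f = f'''/f' - (3/2)(f''/f')²`. -/
def schwarzian (f : ℂ → ℂ) (w : ℂ) : ℂ :=
  deriv (deriv (deriv f)) w / deriv f w - (3 / 2) * (deriv (deriv f) w / deriv f w) ^ 2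

/-- `b(w) = a₂ - f''(w)/(2 f'(w))`. -/
def beckerB (f : ℂ → ℂ) (a₂ : ℂ) (w : ℂ) : ℂ :=
  a₂ - deriv (deriv f) w / (2 * deriv f w)

/-- `Φ(z,w) = f(w) + f'(w)(z-w)/(1 + b(w)(z-w))`. -/
def beckerPhi (f : ℂ → ℂ) (a₂ : ℂ) (z w : ℂ) : ℂ :=
  f w + deriv f w * (z - w) / (1 + beckerB f a₂ w * (z - w))

/-- `φ(z,w) = 2 a₂ (z-w) + (z-w)² (a₂² + S_f(w)/2)`. -/
def beckerphi (f : ℂ → ℂ) (a₂ : ℂ) (z w : ℂ) : ℂ :=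
  2 * a₂ * (z - w) + (z - w) ^ 2 * (a₂ ^ 2 + schwarzian f w / 2)

@[simp]
theorem beckerPhi_self (f : ℂ → ℂ) (a₂ z : ℂ) : beckerPhi f a₂ z z = f z := by
  simp [beckerPhi]

section

variable {f : ℂ → ℂ} {a₂ z w : ℂ}

theorem hasDerivAt_beckerPhi_left (hD : 1 + beckerB f a₂ w * (z - w) ≠ 0) :
    HasDerivAt (fun z' => beckerPhi f a₂ z' w)
      (deriv f w / (1 + beckerB f a₂ w * (z - w)) ^ 2) z := by
  have hnum : HasDerivAt (fun z' => deriv f w * (z' - w)) (deriv f w) z := by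
    simpa using ((hasDerivAt_id z).sub_const w).const_mul (deriv f w)
  have hden : HasDerivAt (fun z' => 1 + beckerB f a₂ w * (z' - w)) (beckerB f a₂ w) z := by
    simpa using (((hasDerivAt_id z).sub_const w).const_mul (beckerB f a₂ w)).const_add 1
  refine ((hnum.div hden hD).const_add (f w)).congr_deriv ?_
  ring

theorem deriv_deriv_eq_beckerB (hu : deriv f w ≠ 0) :
    deriv (deriv f) w = 2 * deriv f w * (a₂ - beckerB f a₂ w) := by
  rw [beckerB]
  field_simp
  ring

theorem hasDerivAt_beckerB (hf : AnalyticAt ℂ f w) (hu : deriv f w ≠ 0) :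
    HasDerivAt (beckerB f a₂) (-(schwarzian f w / 2 + (beckerB f a₂ w - a₂) ^ 2)) w := by
  have h1 : HasDerivAt (deriv f) (deriv (deriv f) w) w :=
    hf.deriv.differentiableAt.hasDerivAt
  have h2 : HasDerivAt (deriv (deriv f)) (deriv (deriv (deriv f)) w) w :=
    hf.deriv.deriv.differentiableAt.hasDerivAt
  have h2u : 2 * deriv f w ≠ 0 := mul_ne_zero two_ne_zero hu
  refine ((hasDerivAt_const w a₂).sub (h2.div (h1.const_mul 2) h2u)).congr_deriv ?_
  simp only [schwarzian, beckerB]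
  field_simp
  ring

theorem hasDerivAt_beckerPhi_right (hf : AnalyticAt ℂ f w) (hu : deriv f w ≠ 0)
    (hD : 1 + beckerB f a₂ w * (z - w) ≠ 0) :
    HasDerivAt (fun w' => beckerPhi f a₂ z w')
      (beckerphi f a₂ z w * (deriv f w / (1 + beckerB f a₂ w * (z - w)) ^ 2)) w := by
  have hnum : HasDerivAt (fun w' => deriv f w' * (z - w'))
      (deriv (deriv f) w * (z - w) + deriv f w * (-1)) w :=
    hf.deriv.differentiableAt.hasDerivAt.mul ((hasDerivAt_id w).const_sub z)
  have hden : HasDerivAt (fun w' => 1 + beckerB f a₂ w' * (z - w'))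
      (-(schwarzian f w / 2 + (beckerB f a₂ w - a₂) ^ 2) * (z - w) + beckerB f a₂ w * (-1)) w :=
    ((hasDerivAt_beckerB hf hu).mul ((hasDerivAt_id w).const_sub z)).const_add 1
  refine (hf.differentiableAt.hasDerivAt.add (hnum.div hden hD)).congr_deriv ?_
  rw [deriv_deriv_eq_beckerB (a₂ := a₂) hu]
  simp only [beckerphi]
  field_simp
  ring

end

/-- `Φ(z,z) = f(z)` on `U` where `f' ≠ 0`, and at every point `(z,w)`
with `w ∈ U`, `f'(w) ≠ 0`, `1 + b(w)(z-w) ≠ 0`, the partial derivatives of `Φ` exist and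
satisfy `∂Φ/∂w (z,w) = φ(z,w) · ∂Φ/∂z (z,w)`. -/
theorem stmt_11 (U : Set ℂ) (hU : IsOpen U) (f : ℂ → ℂ)
    (hf : DifferentiableOn ℂ f U) (a₂ : ℂ) :
    (∀ z ∈ U, deriv f z ≠ 0 → beckerPhi f a₂ z z = f z) ∧
    (∀ z w : ℂ, w ∈ U → deriv f w ≠ 0 → 1 + beckerB f a₂ w * (z - w) ≠ 0 →
      ∃ A : ℂ,
        HasDerivAt (fun z' : ℂ => beckerPhi f a₂ z' w) A z ∧
        HasDerivAt (fun w' : ℂ => beckerPhi f a₂ z w') (beckerphi f a₂ z w * A) w) := by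
  refine ⟨fun z _ _ => beckerPhi_self f a₂ z, fun z w hw hu hD => ?_⟩
  exact ⟨_, hasDerivAt_beckerPhi_left hD,
    hasDerivAt_beckerPhi_right (hf.analyticOnNhd hU w hw) hu hD⟩
end
end

section
/- For z ∈ 𝔻, using principal branches (so that (1 − z²)^{1/2} has positive real part for z ∈ 𝔻), define f(z) := 2z·(i·z + (1 − z²)^{1/2})^{i} / (1 + (1 − z²)^{1/2}). Then 1 + (1 − z²)^{1/2} ≠ 0, f is holomorphic on 𝔻 with f(0) = 0 and f'(0) = 1, and for every z ∈ 𝔻 \ {0}, f(z)/(z·f'(z)) = ((1 + z)/(1 − z))^{1/2}. Moreover, Re((1 + z)/(1 − z)) > 0 for z ∈ 𝔻, so |arg(f(z)/(z·f'(z)))| < π/4. -/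
/-!
Write `s = (1 - z²)^{1/2}` and `w = i z + s`. Since `s² = 1 - z²`, `w (s - i z) = 1`, so
`w + w⁻¹ = 2 s` has positive real part, hence so does `w`: it stays off the branch cut of `w ↦ w^i`.
From `w' = i w / s` the factor `w^i` has derivative `-w^i / s`, and the quotient rule gives
`f' = 2 w^i (1 - z) / (s (1 + s))`, so `f(z) / (z f'(z)) = s / (1 - z)`. This number squares to
`(1 + z)/(1 - z)` and, by the same trick with `u + u⁻¹ = 2 / s`, has positive real part, so it is
the principal square root; the principal square root halves the argument.
-/
open Complex

noncomputable section

lemma Complex.re_pos_of_re_add_inv_pos {u : ℂ} (h : 0 < (u + u⁻¹).re) : 0 < u.re := by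
  by_contra! hu
  have hinv : (u⁻¹).re ≤ 0 := by
    rw [inv_re]
    exact div_nonpos_of_nonpos_of_nonneg hu (normSq_nonneg u)
  rw [add_re] at h
  linarith

lemma Complex.re_cpow_inv_two_pos {x : ℂ} (hx : x ∈ slitPlane) : 0 < (x ^ (2⁻¹ : ℂ)).re := by
  rw [cpow_inv_two_re, Real.sqrt_pos]
  rcases hx with hre | him
  · linarith [re_le_norm x]
  · linarith [abs_re_lt_norm.mpr him, neg_abs_le x.re]

lemma Complex.arg_cpow_inv_two {x : ℂ} (hx : x ≠ 0) : arg (x ^ (2⁻¹ : ℂ)) = arg x / 2 := by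
  rw [← ofReal_ofNat, ← ofReal_inv, cpow_ofReal, ofReal_cos, ofReal_sin,
    arg_mul_cos_add_sin_mul_I]
  · ring
  · exact Real.rpow_pos_of_pos (norm_pos_iff.mpr hx) _
  · constructor <;> nlinarith [neg_pi_lt_arg x, arg_le_pi x, Real.pi_pos]

lemma Complex.abs_arg_cpow_inv_two_lt {x : ℂ} (hx : 0 < x.re) :
    |arg (x ^ (2⁻¹ : ℂ))| < Real.pi / 4 := by
  have hx0 : x ≠ 0 := fun h => by simp [h] at hx
  have harg : |arg x| < Real.pi / 2 := abs_arg_lt_pi_div_two_iff.mpr (.inl hx)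
  rw [arg_cpow_inv_two hx0, abs_div, abs_two]
  linarith

lemma Complex.mem_slitPlane_one_sub_sq {z : ℂ} (hz : ‖z‖ < 1) : 1 - z ^ 2 ∈ slitPlane := by
  have : (z ^ 2).re < 1 := by
    calc (z ^ 2).re ≤ ‖z ^ 2‖ := re_le_norm _
      _ = ‖z‖ ^ 2 := norm_pow z 2
      _ < 1 := by nlinarith [norm_nonneg z]
  exact .inl (by rw [sub_re, one_re]; linarith)

lemma Complex.re_one_add_div_one_sub_pos {z : ℂ} (hz : ‖z‖ < 1) : 0 < ((1 + z) / (1 - z)).re := by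
  have hz1 : 1 - z ≠ 0 := sub_ne_zero.mpr fun h => by simp [← h] at hz
  have hnormSq : z.re * z.re + z.im * z.im < 1 := by
    rw [← normSq_apply, normSq_eq_norm_sq]; nlinarith [norm_nonneg z]
  rw [div_re, ← add_div]
  refine div_pos ?_ (normSq_pos.mpr hz1)
  simp only [add_re, add_im, sub_re, sub_im, one_re, one_im]
  nlinarith

def sqrtOneSubSq (z : ℂ) : ℂ := (1 - z ^ 2) ^ (2⁻¹ : ℂ)

def loewnerExample (z : ℂ) : ℂ :=
  2 * z * (I * z + sqrtOneSubSq z) ^ I / (1 + sqrtOneSubSq z)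

variable {z : ℂ}

lemma sqrtOneSubSq_sq (z : ℂ) : sqrtOneSubSq z ^ 2 = 1 - z ^ 2 :=
  cpow_ofNat_inv_pow _ 2

lemma re_sqrtOneSubSq_pos (hz : 1 - z ^ 2 ∈ slitPlane) : 0 < (sqrtOneSubSq z).re :=
  re_cpow_inv_two_pos hz

lemma sqrtOneSubSq_ne_zero (hz : 1 - z ^ 2 ∈ slitPlane) : sqrtOneSubSq z ≠ 0 :=
  fun h => by simpa [h] using re_sqrtOneSubSq_pos hz

lemma one_add_sqrtOneSubSq_ne_zero (hz : 1 - z ^ 2 ∈ slitPlane) : 1 + sqrtOneSubSq z ≠ 0 := by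
  intro h
  have := congrArg re h
  rw [add_re, one_re, zero_re] at this
  linarith [re_sqrtOneSubSq_pos hz]

lemma I_mul_add_mul_sub_I_mul_eq_one {s : ℂ} (hs : s ^ 2 = 1 - z ^ 2) :
    (I * z + s) * (s - I * z) = 1 := by
  linear_combination hs - z ^ 2 * I_sq

lemma I_mul_add_sqrtOneSubSq_ne_zero (z : ℂ) : I * z + sqrtOneSubSq z ≠ 0 :=
  left_ne_zero_of_mul_eq_one (I_mul_add_mul_sub_I_mul_eq_one (sqrtOneSubSq_sq z))

lemma re_I_mul_add_sqrtOneSubSq_pos (hz : 1 - z ^ 2 ∈ slitPlane) :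
    0 < (I * z + sqrtOneSubSq z).re := by
  apply re_pos_of_re_add_inv_pos
  have hinv := inv_eq_of_mul_eq_one_right (I_mul_add_mul_sub_I_mul_eq_one (sqrtOneSubSq_sq z))
  rw [hinv, show I * z + sqrtOneSubSq z + (sqrtOneSubSq z - I * z) = 2 * sqrtOneSubSq z by ring]
  simp only [mul_re, re_ofNat, im_ofNat, zero_mul, sub_zero]
  linarith [re_sqrtOneSubSq_pos hz]

lemma hasDerivAt_sqrtOneSubSq (hz : 1 - z ^ 2 ∈ slitPlane) :
    HasDerivAt sqrtOneSubSq (-z / sqrtOneSubSq z) z := by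
  have h := ((hasDerivAt_pow 2 z).const_sub 1).cpow_const (c := 2⁻¹) hz
  refine h.congr_deriv ?_
  rw [show (2⁻¹ : ℂ) - 1 = -2⁻¹ by norm_num, cpow_neg]
  change 2⁻¹ * (sqrtOneSubSq z)⁻¹ * _ = _
  push_cast
  ring

lemma hasDerivAt_I_mul_add_sqrtOneSubSq_cpow_I (hz : 1 - z ^ 2 ∈ slitPlane) :
    HasDerivAt (fun x => (I * x + sqrtOneSubSq x) ^ I)
      (-(I * z + sqrtOneSubSq z) ^ I / sqrtOneSubSq z) z := by
  have hw := ((hasDerivAt_id z).const_mul I).add (hasDerivAt_sqrtOneSubSq hz)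
  have h := hw.cpow_const (c := I) (.inl (re_I_mul_add_sqrtOneSubSq_pos hz))
  dsimp only [id, Pi.add_apply] at h
  refine h.congr_deriv ?_
  have hw0 := I_mul_add_sqrtOneSubSq_ne_zero z
  have hs0 := sqrtOneSubSq_ne_zero hz
  rw [cpow_sub _ _ hw0, cpow_one]
  field_simp
  linear_combination ((I * z + sqrtOneSubSq z) ^ I * sqrtOneSubSq z) * I_sq

lemma hasDerivAt_loewnerExample (hz : 1 - z ^ 2 ∈ slitPlane) :
    HasDerivAt loewnerExample
      (2 * (I * z + sqrtOneSubSq z) ^ I * (1 - z) / (sqrtOneSubSq z * (1 + sqrtOneSubSq z))) z := by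
  have h := (((hasDerivAt_id z).const_mul 2).mul (hasDerivAt_I_mul_add_sqrtOneSubSq_cpow_I hz)).div
    ((hasDerivAt_sqrtOneSubSq hz).const_add 1) (one_add_sqrtOneSubSq_ne_zero hz)
  dsimp only [id, Pi.mul_apply, Pi.div_apply] at h
  refine h.congr_deriv ?_
  have hs0 := sqrtOneSubSq_ne_zero hz
  have hs1 := one_add_sqrtOneSubSq_ne_zero hz
  field_simp
  linear_combination (I * z + sqrtOneSubSq z) ^ I * sqrtOneSubSq_sq z

lemma one_sub_ne_zero_of_one_sub_sq_mem_slitPlane (hz : 1 - z ^ 2 ∈ slitPlane) : 1 - z ≠ 0 := by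
  intro h
  apply slitPlane_ne_zero hz
  linear_combination (1 + z) * h

lemma loewnerExample_div_mul_deriv (hz : 1 - z ^ 2 ∈ slitPlane) (hz0 : z ≠ 0) :
    loewnerExample z / (z * deriv loewnerExample z) = sqrtOneSubSq z / (1 - z) := by
  have hw0 : (I * z + sqrtOneSubSq z) ^ I ≠ 0 := by
    rw [Ne, cpow_eq_zero_iff, not_and_or]
    exact .inl (I_mul_add_sqrtOneSubSq_ne_zero z)
  have hs0 := sqrtOneSubSq_ne_zero hz
  have hs1 := one_add_sqrtOneSubSq_ne_zero hz
  have hz1 := one_sub_ne_zero_of_one_sub_sq_mem_slitPlane hz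
  rw [(hasDerivAt_loewnerExample hz).deriv, loewnerExample]
  generalize (I * z + sqrtOneSubSq z) ^ I = A at hw0 ⊢
  field_simp

lemma sqrtOneSubSq_div_one_sub (hz : 1 - z ^ 2 ∈ slitPlane) :
    sqrtOneSubSq z / (1 - z) = ((1 + z) / (1 - z)) ^ (2⁻¹ : ℂ) := by
  have hs0 := sqrtOneSubSq_ne_zero hz
  have hz1 := one_sub_ne_zero_of_one_sub_sq_mem_slitPlane hz
  have hsum : sqrtOneSubSq z / (1 - z) + (sqrtOneSubSq z / (1 - z))⁻¹ = 2 * (sqrtOneSubSq z)⁻¹ := by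
    field_simp
    linear_combination sqrtOneSubSq_sq z
  have hre : 0 < (sqrtOneSubSq z / (1 - z)).re := by
    apply re_pos_of_re_add_inv_pos
    rw [hsum]
    simp only [mul_re, re_ofNat, im_ofNat, zero_mul, sub_zero, inv_re]
    exact mul_pos two_pos (div_pos (re_sqrtOneSubSq_pos hz) (normSq_pos.mpr hs0))
  rw [← sq_cpow_two_inv hre, div_pow, sqrtOneSubSq_sq]
  congr 1
  field_simp
  ring

/-- For `z` in the unit disk, with principal branches,
`f(z) = 2z (i z + (1-z²)^{1/2})^i / (1 + (1-z²)^{1/2})` is well defined and holomorphic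
on the disk, `f(0) = 0`, `f'(0) = 1`, and `f(z)/(z f'(z)) = ((1+z)/(1-z))^{1/2}` for
`z ≠ 0`; moreover `Re((1+z)/(1-z)) > 0`, so `|arg(f(z)/(z f'(z)))| < π/4`. -/
theorem stmt_14 :
    (∀ z ∈ Metric.ball (0 : ℂ) 1, 1 + (1 - z ^ 2) ^ ((1 : ℂ) / 2) ≠ 0) ∧
    DifferentiableOn ℂ
      (fun z : ℂ => 2 * z * (Complex.I * z + (1 - z ^ 2) ^ ((1 : ℂ) / 2)) ^ Complex.I
          / (1 + (1 - z ^ 2) ^ ((1 : ℂ) / 2)))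
      (Metric.ball 0 1) ∧
    (fun z : ℂ => 2 * z * (Complex.I * z + (1 - z ^ 2) ^ ((1 : ℂ) / 2)) ^ Complex.I
          / (1 + (1 - z ^ 2) ^ ((1 : ℂ) / 2))) 0 = 0 ∧
    deriv (fun z : ℂ => 2 * z * (Complex.I * z + (1 - z ^ 2) ^ ((1 : ℂ) / 2)) ^ Complex.I
          / (1 + (1 - z ^ 2) ^ ((1 : ℂ) / 2))) 0 = 1 ∧
    (∀ z ∈ Metric.ball (0 : ℂ) 1, z ≠ 0 →
        (fun z : ℂ => 2 * z * (Complex.I * z + (1 - z ^ 2) ^ ((1 : ℂ) / 2)) ^ Complex.I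
            / (1 + (1 - z ^ 2) ^ ((1 : ℂ) / 2))) z
          / (z * deriv (fun z : ℂ =>
              2 * z * (Complex.I * z + (1 - z ^ 2) ^ ((1 : ℂ) / 2)) ^ Complex.I
                / (1 + (1 - z ^ 2) ^ ((1 : ℂ) / 2))) z)
          = ((1 + z) / (1 - z)) ^ ((1 : ℂ) / 2)) ∧
    (∀ z ∈ Metric.ball (0 : ℂ) 1, 0 < ((1 + z) / (1 - z)).re) ∧
    (∀ z ∈ Metric.ball (0 : ℂ) 1, z ≠ 0 →
        |Complex.arg ((fun z : ℂ =>
            2 * z * (Complex.I * z + (1 - z ^ 2) ^ ((1 : ℂ) / 2)) ^ Complex.I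
              / (1 + (1 - z ^ 2) ^ ((1 : ℂ) / 2))) z
          / (z * deriv (fun z : ℂ =>
              2 * z * (Complex.I * z + (1 - z ^ 2) ^ ((1 : ℂ) / 2)) ^ Complex.I
                / (1 + (1 - z ^ 2) ^ ((1 : ℂ) / 2))) z))| < Real.pi / 4) := by
  have hf : (fun z : ℂ => 2 * z * (I * z + (1 - z ^ 2) ^ ((1 : ℂ) / 2)) ^ I
      / (1 + (1 - z ^ 2) ^ ((1 : ℂ) / 2))) = loewnerExample := by
    simp only [one_div]; rfl
  rw [hf]
  simp only [one_div, Metric.mem_ball, dist_zero_right]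
  have quotient_eq : ∀ z : ℂ, ‖z‖ < 1 → z ≠ 0 →
      loewnerExample z / (z * deriv loewnerExample z) = ((1 + z) / (1 - z)) ^ (2⁻¹ : ℂ) :=
    fun z hz hz0 => (loewnerExample_div_mul_deriv (mem_slitPlane_one_sub_sq hz) hz0).trans
      (sqrtOneSubSq_div_one_sub (mem_slitPlane_one_sub_sq hz))
  refine ⟨fun z hz => one_add_sqrtOneSubSq_ne_zero (mem_slitPlane_one_sub_sq hz),
    fun z hz => (hasDerivAt_loewnerExample
      (mem_slitPlane_one_sub_sq (mem_ball_zero_iff.mp hz))).differentiableAt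
      |>.differentiableWithinAt, by simp [loewnerExample], ?_, quotient_eq,
    fun z hz => re_one_add_div_one_sub_pos hz, fun z hz hz0 => ?_⟩
  · rw [(hasDerivAt_loewnerExample (mem_slitPlane_one_sub_sq (by simp))).deriv]
    norm_num [sqrtOneSubSq]
  · rw [quotient_eq z hz hz0]
    exact abs_arg_cpow_inv_two_lt (re_one_add_div_one_sub_pos hz)

end
end

section
/- Let k ∈ (0,1), ρ := exp((1/k − 1)/2), and let μ : Δ → ℂ be defined by μ(z) = −k·(z⁴/|z|⁴)·(ρ + conj(z))/(ρ + z) for 1 < |z| < ρ, and μ(z) = −k·z³/|z|³ for |z| ≥ ρ. Let (φ_n) be a sequence of functions holomorphic on Δ with ∬_Δ |φ_n(z)| dA(z) ≤ 1 for all n, converging to 0 locally uniformly on Δ. Then ∬_Δ φ_n(z)·μ(z) dA(z) → 0 as n → ∞. -/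
/-!
On the circle `|z| = r` we have `conj z = r² / z`, so there `z⁻¹ μ(z)` agrees with a function
holomorphic in an annulus: `-(k / r³) z²` when `r ≥ ρ`, and `-(k / r⁴) z² (ρ z + r²) / (ρ + z)`
when `1 < r < ρ` (holomorphic for `|z| < ρ`). By Cauchy's theorem every circle integral
`∮_{|z| = r} φ μ dz / z` can therefore be moved to one fixed circle `|z| = s` with `1 < s < ρ`,
so the mean of `φ μ` over `|z| = r` is `O(sup_{|z| = s} |φ| / r³)`. Integrating in polar
coordinates gives `|∬_Δ φ μ dA| ≤ C sup_{|z| = s} |φ|`, and the right-hand side tends to `0`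
because `φ_n → 0` uniformly on the compact circle `|z| = s`.
-/

open MeasureTheory Filter

noncomputable section

/-- The Beltrami coefficient of the Becker extension of the extremal function for the
third-coefficient problem: `μ(z) = -k (z⁴/|z|⁴)(ρ + conj z)/(ρ + z)` for `1 < |z| < ρ`
and `μ(z) = -k z³/|z|³` for `|z| ≥ ρ`. -/
def extremalMu (k ρ : ℝ) (z : ℂ) : ℂ :=
  if ‖z‖ < ρ then
    -(k : ℂ) * (z ^ 4 / ((‖z‖ : ℂ)) ^ 4) *
      (((ρ : ℂ) + (starRingEnd ℂ) z) / ((ρ : ℂ) + z))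
  else
    -(k : ℂ) * (z ^ 3 / ((‖z‖ : ℂ)) ^ 3)

open Set Metric Real

theorem Complex.integrableOn_polarCoord_symm {E : Type*} [NormedAddCommGroup E] [NormedSpace ℝ E]
    {f : ℂ → E} (hf : Integrable f) :
    IntegrableOn (fun p : ℝ × ℝ => p.1 • f (Complex.polarCoord.symm p)) polarCoord.target := by
  have hf' : IntegrableOn (f ∘ Complex.measurableEquivRealProd.symm)
      (polarCoord.symm '' polarCoord.target) := by
    rw [polarCoord.symm_image_target_eq_source]
    exact ((Complex.volume_preserving_equiv_real_prod.symm.integrable_comp_emb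
      Complex.measurableEquivRealProd.symm.measurableEmbedding).2 hf).integrableOn
  rw [integrableOn_image_iff_integrableOn_abs_det_fderiv_smul volume
    polarCoord.open_target.measurableSet
    (fun p _ => (hasFDerivAt_polarCoord_symm p).hasFDerivWithinAt) polarCoord.symm.injOn] at hf'
  refine hf'.congr_fun (fun p hp => ?_) polarCoord.open_target.measurableSet
  simp only [Function.comp_apply]
  rw [Complex.measurableEquivRealProd_symm_polarCoord_symm_apply,
    det_fderivPolarCoordSymm, abs_of_pos (show 0 < p.1 from hp.1)]

theorem integral_eq_integral_Ioi_circleAverage {E : Type*} [NormedAddCommGroup E]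
    [NormedSpace ℝ E] [CompleteSpace E] {f : ℂ → E} (hf : Integrable f) :
    ∫ z, f z = ∫ r in Ioi 0, (2 * π * r) • circleAverage f 0 r := by
  rw [← Complex.integral_comp_polarCoord_symm]
  refine (setIntegral_prod _ (Complex.integrableOn_polarCoord_symm hf)).trans
    (setIntegral_congr_fun measurableSet_Ioi fun r _ => ?_)
  have hper : Function.Periodic (fun θ => f (circleMap 0 r θ)) (2 * π) :=
    fun θ => congrArg f (periodic_circleMap 0 r θ)
  have hIoo : ∫ θ in Ioo (-π) π, f (circleMap 0 r θ) = ∫ θ in 0..2 * π, f (circleMap 0 r θ) := by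
    rw [← integral_Ioc_eq_integral_Ioo, ← intervalIntegral.integral_of_le (by linarith [pi_pos]),
      ← zero_add (2 * π), ← hper.intervalIntegral_add_eq (-π) 0]
    ring_nf
  have hcirc : ∀ θ, Complex.polarCoord.symm (r, θ) = circleMap 0 r θ := fun θ => by
    rw [Complex.polarCoord_symm_apply, circleMap_zero, Complex.exp_mul_I]
    push_cast
    ring
  simp only [hcirc, integral_smul, hIoo, circleAverage_def, smul_smul]
  congr 1
  field_simp

theorem circleIntegral_eq_of_differentiableOn_annulus {E : Type*} [NormedAddCommGroup E]
    [NormedSpace ℂ E] [CompleteSpace E] {F : ℂ → E} {a b r s : ℝ} (ha : 0 ≤ a)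
    (hF : DifferentiableOn ℂ F {z | a < ‖z‖ ∧ ‖z‖ < b}) (hr : r ∈ Ioo a b) (hs : s ∈ Ioo a b) :
    ∮ z in C(0, r), F z = ∮ z in C(0, s), F z := by
  wlog hrs : r ≤ s generalizing r s
  · exact (this hs hr (le_of_not_ge hrs)).symm
  have hsub : closedBall (0 : ℂ) s \ ball 0 r ⊆ {z | a < ‖z‖ ∧ ‖z‖ < b} := fun z hz => by
    simp only [Set.mem_sdiff, mem_closedBall, mem_ball, dist_zero_right, not_lt] at hz
    exact ⟨hr.1.trans_le hz.2, hz.1.trans_lt hs.2⟩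
  have hopen : IsOpen {z : ℂ | a < ‖z‖ ∧ ‖z‖ < b} :=
    (isOpen_lt continuous_const continuous_norm).inter (isOpen_lt continuous_norm continuous_const)
  refine (Complex.circleIntegral_eq_of_differentiable_on_annulus_off_countable
    (ha.trans_lt hr.1) hrs countable_empty (hF.continuousOn.mono hsub) fun z hz => ?_).symm
  exact hF.differentiableAt (hopen.mem_nhds
    (hsub (sdiff_subset_sdiff ball_subset_closedBall ball_subset_closedBall hz.1)))

theorem norm_circleIntegral_le_of_differentiableOn_annulus {E : Type*} [NormedAddCommGroup E]
    [NormedSpace ℂ E] [CompleteSpace E] {F : ℂ → E} {a b r s C : ℝ} (ha : 0 ≤ a)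
    (hF : DifferentiableOn ℂ F {z | a < ‖z‖ ∧ ‖z‖ < b}) (hr : r ∈ Ioo a b) (hs : s ∈ Ioo a b)
    (hC : ∀ z ∈ sphere (0 : ℂ) s, ‖F z‖ ≤ C) :
    ‖∮ z in C(0, r), F z‖ ≤ 2 * π * s * C := by
  rw [circleIntegral_eq_of_differentiableOn_annulus ha hF hr hs]
  exact circleIntegral.norm_integral_le_of_norm_le_const (ha.trans hs.1.le) hC

theorem ofReal_add_ne_zero_of_norm_lt {ρ : ℝ} {z : ℂ} (h : ‖z‖ < ρ) : (ρ : ℂ) + z ≠ 0 :=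
  fun h0 => by
    rw [← neg_eq_iff_add_eq_zero.2 h0, norm_neg, Complex.norm_real, Real.norm_eq_abs] at h
    exact (le_abs_self ρ).not_gt h

section extremalMu

variable {k ρ s r ε : ℝ} {ψ : ℂ → ℂ}

theorem norm_extremalMu_le (k ρ : ℝ) (z : ℂ) : ‖extremalMu k ρ z‖ ≤ |k| := by
  rcases eq_or_ne z 0 with rfl | hz
  · simp [extremalMu]
  have hz' : ‖z‖ ≠ 0 := norm_ne_zero_iff.2 hz
  unfold extremalMu
  split_ifs with h
  · have hconj : ‖(ρ : ℂ) + starRingEnd ℂ z‖ = ‖(ρ : ℂ) + z‖ := by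
      rw [show (ρ : ℂ) + starRingEnd ℂ z = starRingEnd ℂ (ρ + z) by simp, RCLike.norm_conj]
    simp [hconj, hz', ofReal_add_ne_zero_of_norm_lt h]
  · simp [hz']

theorem measurable_extremalMu (k ρ : ℝ) : Measurable (extremalMu k ρ) := by
  unfold extremalMu
  refine Measurable.ite (measurableSet_lt measurable_norm measurable_const) ?_ ?_ <;> fun_prop

theorem extremalMu_of_le {z : ℂ} (h : ρ ≤ ‖z‖) :
    extremalMu k ρ z = -k * (z ^ 3 / (‖z‖ : ℂ) ^ 3) :=
  if_neg h.not_gt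

theorem extremalMu_of_lt {z : ℂ} (hz : z ≠ 0) (h : ‖z‖ < ρ) :
    extremalMu k ρ z = -k * (z ^ 3 * (ρ * z + (‖z‖ : ℂ) ^ 2) / ((‖z‖ : ℂ) ^ 4 * (ρ + z))) := by
  have hconj : starRingEnd ℂ z = (‖z‖ : ℂ) ^ 2 / z := by
    rw [eq_div_iff hz, mul_comm, Complex.mul_conj, Complex.normSq_eq_norm_sq]
    push_cast; ring
  rw [extremalMu, if_pos h, hconj]
  have : (‖z‖ : ℂ) ≠ 0 := by exact_mod_cast norm_ne_zero_iff.2 hz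
  field_simp

theorem norm_circleIntegral_mul_extremalMu_le_of_le
    (hψ : DifferentiableOn ℂ ψ {z | 1 < ‖z‖}) (hs : s ∈ Ioo 1 ρ) (hr : ρ ≤ r)
    (hε : ∀ z ∈ sphere (0 : ℂ) s, ‖ψ z‖ ≤ ε) :
    ‖∮ z in C(0, r), z⁻¹ • (ψ z * extremalMu k ρ z)‖ ≤ 2 * π * s * (|k| * s ^ 2 * ε / r ^ 3) := by
  have hr0 : 0 < r := by linarith [hs.1, hs.2]
  have heq : EqOn (fun z => z⁻¹ • (ψ z * extremalMu k ρ z))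
      (fun z => -(k / r ^ 3 : ℂ) * (ψ z * z ^ 2)) (sphere 0 r) := fun z hz => by
    have hzr : ‖z‖ = r := mem_sphere_zero_iff_norm.1 hz
    have hz : z ≠ 0 := norm_ne_zero_iff.1 (hzr ▸ hr0.ne')
    simp only [smul_eq_mul]
    rw [extremalMu_of_le (hzr ▸ hr), hzr]
    field_simp
  rw [circleIntegral.integral_congr hr0.le heq]
  refine norm_circleIntegral_le_of_differentiableOn_annulus (b := r + 1) zero_le_one
    (((hψ.mono fun z hz => hz.1).mul (by fun_prop)).const_mul _)
    ⟨by linarith [hs.1, hs.2], by linarith⟩ ⟨hs.1, by linarith [hs.2]⟩ fun z hz => ?_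
  have hzs : ‖z‖ = s := mem_sphere_zero_iff_norm.1 hz
  have hψz := hε z hz
  simp only [norm_mul, norm_neg, norm_div, norm_pow, Complex.norm_real, Real.norm_eq_abs,
    abs_of_pos hr0, hzs]
  calc |k| / r ^ 3 * (‖ψ z‖ * s ^ 2) = |k| * s ^ 2 * ‖ψ z‖ / r ^ 3 := by ring
    _ ≤ |k| * s ^ 2 * ε / r ^ 3 := by gcongr

theorem norm_circleIntegral_mul_extremalMu_le_of_lt
    (hψ : DifferentiableOn ℂ ψ {z | 1 < ‖z‖}) (hs : s ∈ Ioo 1 ρ) (hr : r ∈ Ioo 1 ρ)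
    (hε : ∀ z ∈ sphere (0 : ℂ) s, ‖ψ z‖ ≤ ε) :
    ‖∮ z in C(0, r), z⁻¹ • (ψ z * extremalMu k ρ z)‖ ≤
      2 * π * s * (|k| * s ^ 2 * (2 * ρ ^ 2 / (ρ - s)) * ε / r ^ 4) := by
  have hr0 : 0 < r := by linarith [hr.1]
  have hρ0 : 0 < ρ := by linarith [hr.1, hr.2]
  have heq : EqOn (fun z => z⁻¹ • (ψ z * extremalMu k ρ z))
      (fun z => -(k / r ^ 4 : ℂ) * (ψ z * z ^ 2 * (ρ * z + r ^ 2) / (ρ + z))) (sphere 0 r) :=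
    fun z hz => by
      have hzr : ‖z‖ = r := mem_sphere_zero_iff_norm.1 hz
      have hz : z ≠ 0 := norm_ne_zero_iff.1 (hzr ▸ hr0.ne')
      have := ofReal_add_ne_zero_of_norm_lt (hzr ▸ hr.2)
      simp only [smul_eq_mul]
      rw [extremalMu_of_lt hz (hzr ▸ hr.2), hzr]
      field_simp
  rw [circleIntegral.integral_congr hr0.le heq]
  refine norm_circleIntegral_le_of_differentiableOn_annulus (b := ρ) zero_le_one
    ?_ hr hs fun z hz => ?_
  · have hψ' : DifferentiableOn ℂ ψ {z : ℂ | 1 < ‖z‖ ∧ ‖z‖ < ρ} := hψ.mono fun z hz => hz.1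
    refine DifferentiableOn.const_mul (DifferentiableOn.div ?_ ?_
      fun z hz => ofReal_add_ne_zero_of_norm_lt hz.2) _ <;> fun_prop
  have hzs : ‖z‖ = s := mem_sphere_zero_iff_norm.1 hz
  have hψz := hε z hz
  have hnum : ‖(ρ : ℂ) * z + r ^ 2‖ ≤ 2 * ρ ^ 2 := by
    refine (norm_add_le _ _).trans ?_
    simp only [norm_mul, norm_pow, Complex.norm_real, Real.norm_eq_abs, abs_of_pos hρ0,
      abs_of_pos hr0, hzs]
    nlinarith [hs.1, hs.2, hr.1, hr.2]
  have hden : ρ - s ≤ ‖(ρ : ℂ) + z‖ := by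
    have := norm_sub_norm_le (ρ : ℂ) (-z)
    rwa [sub_neg_eq_add, Complex.norm_real, Real.norm_eq_abs, abs_of_pos hρ0, norm_neg, hzs] at this
  simp only [norm_mul, norm_neg, norm_div, norm_pow, Complex.norm_real, Real.norm_eq_abs,
    abs_of_pos hr0, hzs]
  have hsρ : 0 < ρ - s := sub_pos.2 hs.2
  have hε0 : 0 ≤ ε := (norm_nonneg _).trans hψz
  calc |k| / r ^ 4 * (‖ψ z‖ * s ^ 2 * ‖(ρ : ℂ) * z + r ^ 2‖ / ‖(ρ : ℂ) + z‖)
      ≤ |k| / r ^ 4 * (ε * s ^ 2 * (2 * ρ ^ 2) / (ρ - s)) := by gcongr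
    _ = |k| * s ^ 2 * (2 * ρ ^ 2 / (ρ - s)) * ε / r ^ 4 := by ring

theorem norm_circleAverage_mul_extremalMu_le
    (hψ : DifferentiableOn ℂ ψ {z | 1 < ‖z‖}) (hs : s ∈ Ioo 1 ρ) (hr : 1 < r)
    (hε : ∀ z ∈ sphere (0 : ℂ) s, ‖ψ z‖ ≤ ε) :
    ‖circleAverage (fun z => ψ z * extremalMu k ρ z) 0 r‖ ≤
      s * (|k| * s ^ 2 * (2 * ρ ^ 2 / (ρ - s)) * ε) / r ^ 3 := by
  have hr0 : 0 < r := by linarith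
  have hε0 : 0 ≤ ε :=
    (norm_nonneg _).trans (hε s (by simp [abs_of_pos (zero_lt_one.trans hs.1)]))
  have hs0 : 0 < s := zero_lt_one.trans hs.1
  have hK : 1 ≤ 2 * ρ ^ 2 / (ρ - s) := by
    rw [le_div_iff₀ (sub_pos.2 hs.2)]
    nlinarith [hs.1, hs.2]
  rw [circleAverage_eq_circleIntegral hr0.ne', norm_smul]
  simp only [sub_zero]
  have h2π : ‖(2 * π * Complex.I)⁻¹‖ = (2 * π)⁻¹ := by simp [abs_of_pos pi_pos]
  rw [h2π, inv_mul_le_iff₀ (by positivity)]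
  rcases lt_or_ge r ρ with hrρ | hρr
  · refine (norm_circleIntegral_mul_extremalMu_le_of_lt hψ hs ⟨hr, hrρ⟩ hε).trans ?_
    have : r ^ 3 ≤ r ^ 4 := pow_le_pow_right₀ hr.le (by norm_num)
    calc 2 * π * s * (|k| * s ^ 2 * (2 * ρ ^ 2 / (ρ - s)) * ε / r ^ 4)
        ≤ 2 * π * s * (|k| * s ^ 2 * (2 * ρ ^ 2 / (ρ - s)) * ε / r ^ 3) := by gcongr
      _ = _ := by ring
  · refine (norm_circleIntegral_mul_extremalMu_le_of_le hψ hs hρr hε).trans ?_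
    calc 2 * π * s * (|k| * s ^ 2 * ε / r ^ 3)
        = 2 * π * s * (|k| * s ^ 2 * 1 * ε / r ^ 3) := by ring
      _ ≤ 2 * π * s * (|k| * s ^ 2 * (2 * ρ ^ 2 / (ρ - s)) * ε / r ^ 3) := by gcongr
      _ = _ := by ring

theorem norm_setIntegral_mul_extremalMu_le
    (hψ : DifferentiableOn ℂ ψ {z | 1 < ‖z‖}) (hψi : IntegrableOn ψ {z | 1 < ‖z‖})
    (hs : s ∈ Ioo 1 ρ) (hε : ∀ z ∈ sphere (0 : ℂ) s, ‖ψ z‖ ≤ ε) :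
    ‖∫ z in {z : ℂ | 1 < ‖z‖}, ψ z * extremalMu k ρ z‖ ≤
      2 * π * s * (|k| * s ^ 2 * (2 * ρ ^ 2 / (ρ - s))) * ε := by
  set Δ := {z : ℂ | 1 < ‖z‖}
  set F := Δ.indicator fun z => ψ z * extremalMu k ρ z
  set C := s * (|k| * s ^ 2 * (2 * ρ ^ 2 / (ρ - s)) * ε)
  have hΔ : MeasurableSet Δ := measurableSet_lt measurable_const measurable_norm
  have hF : Integrable F := IntegrableOn.integrable_indicator
    (hψi.mul_bdd (measurable_extremalMu k ρ).aestronglyMeasurable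
      (ae_of_all _ (norm_extremalMu_le k ρ))) hΔ
  have hsmall : ∀ r ∈ Ioi 0 \ Ioi 1, (2 * π * r) • circleAverage F 0 r = 0 := fun r hr => by
    have hF0 : EqOn F 0 (sphere 0 |r|) := fun z hz => indicator_of_notMem (by
      simpa [Δ, mem_sphere_zero_iff_norm.1 hz, abs_of_pos (show 0 < r from hr.1)] using hr.2) _
    rw [circleAverage_congr_sphere hF0]
    simp [circleAverage_def]
  have hlarge : ∀ r ∈ Ioi 1, ‖(2 * π * r) • circleAverage F 0 r‖ ≤ 2 * π * C * r ^ (-2 : ℝ) :=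
    fun r hr => by
      have hr0 : 0 < r := zero_lt_one.trans hr
      have hFψ : EqOn F (fun z => ψ z * extremalMu k ρ z) (sphere 0 |r|) := fun z hz =>
        indicator_of_mem (by simpa [Δ, mem_sphere_zero_iff_norm.1 hz, abs_of_pos hr0]) _
      rw [circleAverage_congr_sphere hFψ, norm_smul, Real.norm_of_nonneg (by positivity),
        Real.rpow_neg hr0.le]
      calc 2 * π * r * ‖circleAverage (fun z => ψ z * extremalMu k ρ z) 0 r‖
          ≤ 2 * π * r * (C / r ^ 3) := by
            gcongr; exact norm_circleAverage_mul_extremalMu_le hψ hs hr hε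
        _ = 2 * π * C * (r ^ (2 : ℝ))⁻¹ := by
            rw [Real.rpow_two]; field_simp
  rw [← integral_indicator hΔ, integral_eq_integral_Ioi_circleAverage hF,
    setIntegral_eq_of_subset_of_forall_sdiff_eq_zero measurableSet_Ioi
      (Ioi_subset_Ioi zero_le_one) hsmall]
  calc ‖∫ r in Ioi 1, (2 * π * r) • circleAverage F 0 r‖
      ≤ ∫ r in Ioi 1, 2 * π * C * r ^ (-2 : ℝ) :=
        norm_integral_le_of_norm_le
          ((integrableOn_Ioi_rpow_of_lt (by norm_num) zero_lt_one).const_mul _)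
          ((ae_restrict_iff' measurableSet_Ioi).2 (ae_of_all _ hlarge))
    _ = 2 * π * s * (|k| * s ^ 2 * (2 * ρ ^ 2 / (ρ - s))) * ε := by
        rw [integral_const_mul, integral_Ioi_rpow_of_lt (by norm_num) zero_lt_one]
        norm_num [C]
        ring

end extremalMu

theorem stmt_15_general (k : ℝ) (hk0 : 0 < k) (hk1 : k < 1)
    (φ : ℕ → ℂ → ℂ)
    (hhol : ∀ n, DifferentiableOn ℂ (φ n) {z : ℂ | 1 < ‖z‖})
    (hint : ∀ n, IntegrableOn (φ n) {z : ℂ | 1 < ‖z‖} volume)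
    (hconv : TendstoLocallyUniformlyOn φ 0 atTop {z : ℂ | 1 < ‖z‖}) :
    Tendsto
      (fun n => ∫ z in {z : ℂ | 1 < ‖z‖},
          φ n z * extremalMu k (Real.exp ((1 / k - 1) / 2)) z)
      atTop (nhds 0) := by
  set ρ := Real.exp ((1 / k - 1) / 2)
  have hρ : 1 < ρ := Real.one_lt_exp_iff.2 (by linarith [one_lt_one_div hk0 hk1])
  obtain ⟨s, hs⟩ := nonempty_Ioo.2 hρ
  set C := 2 * π * s * (|k| * s ^ 2 * (2 * ρ ^ 2 / (ρ - s)))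
  have hC : 0 ≤ C := by
    have hsρ : 0 < ρ - s := sub_pos.2 hs.2
    have hs0 : 0 < s := zero_lt_one.trans hs.1
    positivity
  have huni : TendstoUniformlyOn φ 0 atTop (sphere 0 s) :=
    (tendstoLocallyUniformlyOn_iff_forall_isCompact
      (isOpen_lt continuous_const continuous_norm)).1 hconv _
      (fun z hz => by simpa [mem_sphere_zero_iff_norm.1 hz] using hs.1) (isCompact_sphere 0 s)
  rw [NormedAddGroup.tendsto_nhds_zero]
  intro ε hε
  filter_upwards [Metric.tendstoUniformlyOn_iff.1 huni (ε / (C + 1)) (by positivity)] with n hn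
  calc _ ≤ C * (ε / (C + 1)) := norm_setIntegral_mul_extremalMu_le (hhol n) (hint n) hs
          fun z hz => by simpa using (hn z hz).le
    _ < ε := by rw [mul_div_assoc', div_lt_iff₀ (by positivity)]; nlinarith

/-- With `ρ = exp((1/k - 1)/2)` and `μ` as above on `Δ = {|z| > 1}`:
for any sequence `(φ_n)` of holomorphic functions on `Δ` with `∬_Δ |φ_n| dA ≤ 1`
converging to `0` locally uniformly on `Δ`, one has `∬_Δ φ_n μ dA → 0`. -/
theorem stmt_15 (k : ℝ) (hk0 : 0 < k) (hk1 : k < 1)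
    (φ : ℕ → ℂ → ℂ)
    (hhol : ∀ n, DifferentiableOn ℂ (φ n) {z : ℂ | 1 < ‖z‖})
    (hint : ∀ n, IntegrableOn (φ n) {z : ℂ | 1 < ‖z‖} volume)
    (hbd : ∀ n, (∫ z in {z : ℂ | 1 < ‖z‖}, ‖φ n z‖) ≤ 1)
    (hconv : TendstoLocallyUniformlyOn φ 0 atTop {z : ℂ | 1 < ‖z‖}) :
    Tendsto
      (fun n => ∫ z in {z : ℂ | 1 < ‖z‖},
          φ n z * extremalMu k (Real.exp ((1 / k - 1) / 2)) z)
      atTop (nhds 0) :=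
  stmt_15_general k hk0 hk1 φ hhol hint hconv

end
end
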